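/- The union of the SU(1,1)-translates of the slice points equals W: the set of all points g·q ∈ ℙ¹ × ℙ¹, where g ranges over SU(1,1) and q ranges over {z₁} ∪ {ℓ₁(t) : 0 < t < 1} ∪ {w₁} ∪ {ℓ₂(s) : s > 0}, is exactly W = {([z₁:z₂],[w₁:w₂]) : |z₂| < |z₁| and z₁w₁ − z₂w₂ ≠ 0}. -/

import Mathlib

open Matrix Complex

noncomputable section

abbrev M2 : Type := Matrix (Fin 2) (Fin 2) ℂ

/-- The diagonal matrix `diag(1,-1)`. -/
def I11 : M2 := !![1, 0; 0, -1]

/-- The conjugation `σ(g) = I₁₁ ⬝ ᵗ(ḡ)⁻¹ ⬝ I₁₁`. -/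
def sigmaC (g : M2) : M2 := I11 * ((g.map (starRingEnd ℂ))ᵀ)⁻¹ * I11

/-- `overline{σ(g)}`, the matrix acting on the second factor. -/
def tw (g : M2) : M2 := (sigmaC g).map (starRingEnd ℂ)

/-- The predicate `g ∈ SU(1,1)`. -/
def SU11 (g : M2) : Prop := g.det = 1 ∧ (g.map (starRingEnd ℂ))ᵀ * I11 * g = I11

abbrev P1 : Type := Projectivization ℂ (Fin 2 → ℂ)

lemma fstNe (a b : ℂ) (ha : a ≠ 0) : ![a, b] ≠ 0 := by
  intro h
  exact ha (by simpa using congrFun h 0)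

lemma oneNe (b : ℂ) : ![1, b] ≠ 0 := fstNe 1 b one_ne_zero

/-- The open `SL(2,ℂ)`-orbit `{ z₁w₁ - z₂w₂ ≠ 0 }` in `ℙ¹ × ℙ¹`. -/
def Omega : Set (P1 × P1) :=
  {p | ∃ (z w : Fin 2 → ℂ) (hz : z ≠ 0) (hw : w ≠ 0),
    p = (Projectivization.mk ℂ z hz, Projectivization.mk ℂ w hw) ∧
    z 0 * w 0 - z 1 * w 1 ≠ 0}

/-- The domain `W ⊂ ℙ¹ × ℙ¹`. -/
def W : Set (P1 × P1) :=
  {p | ∃ (z w : Fin 2 → ℂ) (hz : z ≠ 0) (hw : w ≠ 0),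
    p = (Projectivization.mk ℂ z hz, Projectivization.mk ℂ w hw) ∧
    ‖z 1‖ < ‖z 0‖ ∧ z 0 * w 0 - z 1 * w 1 ≠ 0}

/-- Homogeneous coordinates of the slice point `z₁ = ([1:0],[1:0])`. -/
def z1v : (Fin 2 → ℂ) × (Fin 2 → ℂ) := (![1, 0], ![1, 0])

/-- Homogeneous coordinates of the slice point `w₁ = ([1:0],[1:i])`. -/
def w1v : (Fin 2 → ℂ) × (Fin 2 → ℂ) := (![1, 0], ![1, Complex.I])

/-- Homogeneous coordinates of the slice point `ℓ₁(t)`. -/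
def l1v (t : ℝ) : (Fin 2 → ℂ) × (Fin 2 → ℂ) :=
  (![(Real.cos (Real.pi * (1 - t) / 4) : ℂ),
      Complex.I * (Real.sin (Real.pi * (1 - t) / 4) : ℂ)],
   ![(Real.cos (Real.pi * (1 - t) / 4) : ℂ),
      Complex.I * (Real.sin (Real.pi * (1 - t) / 4) : ℂ)])

/-- Homogeneous coordinates of the slice point `ℓ₂(s)`. -/
def l2v (s : ℝ) : (Fin 2 → ℂ) × (Fin 2 → ℂ) :=
  (![(Real.exp s : ℂ), Complex.I * (Real.exp (-s) : ℂ)],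
   ![(Real.exp (-s) : ℂ), Complex.I * (Real.exp s : ℂ)])

/-!
`SU(1,1)` acts on the first factor as on the unit disc, preserving `|z₀|² - |z₁|²`, and, since it
acts on the second factor through `ḡ`, it also preserves `z₀w₀ - z₁w₁`; so `W` is invariant and
contains the slice points. Conversely, a boost moves `[z]` to `[1:0]`, and the stabiliser of
`[1:0]` (the rotations `diag(a, ā)`) turns the affine coordinate of `[w]` by `a²`. Hence every point
of `W` is a translate of `([1:0],[1:iρ])` with `ρ = |z̄₀w₁ - z̄₁w₀| / |z₀w₀ - z₁w₁|`, and two points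
with the same `ρ` are translates of each other. The slice points realise every `ρ ≥ 0`: `0` at
`z₁`, `sin(π(1-t)/2) ∈ (0,1)` at `ℓ₁(t)`, `1` at `w₁` and `cosh 2s ∈ (1,∞)` at `ℓ₂(s)`.
-/

open scoped ComplexConjugate

lemma I11_mul_I11 : I11 * I11 = 1 := by
  simp [I11, ← Matrix.one_fin_two]

-- `Matrix.mul_inv_rev` needs no invertibility, so `tw` is multiplicative on all of `M2`.
lemma tw_mul (g h : M2) : tw (g * h) = tw g * tw h := by
  have : sigmaC (g * h) = sigmaC g * sigmaC h := by
    simp only [sigmaC, Matrix.map_mul, Matrix.transpose_mul, Matrix.mul_inv_rev, Matrix.mul_assoc,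
      ← Matrix.mul_assoc I11 I11, I11_mul_I11, Matrix.one_mul]
  rw [tw, this, Matrix.map_mul, tw, tw]

lemma tw_one : tw 1 = 1 := by
  simp [tw, sigmaC, I11_mul_I11]

lemma SU11.conjTranspose_mul_I11_mul {g : M2} (hg : SU11 g) : gᴴ * I11 * g = I11 := hg.2

lemma SU11.mul {g h : M2} (hg : SU11 g) (hh : SU11 h) : SU11 (g * h) := by
  refine ⟨by rw [Matrix.det_mul, hg.1, hh.1, one_mul], ?_⟩
  change (g * h)ᴴ * I11 * (g * h) = I11
  calc (g * h)ᴴ * I11 * (g * h) = hᴴ * (gᴴ * I11 * g) * h := by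
        simp only [Matrix.conjTranspose_mul, Matrix.mul_assoc]
    _ = I11 := by rw [hg.conjTranspose_mul_I11_mul, hh.conjTranspose_mul_I11_mul]

lemma SU11.isUnit_det {g : M2} (hg : SU11 g) : IsUnit g.det := hg.1 ▸ isUnit_one

lemma SU11.inv {g : M2} (hg : SU11 g) : SU11 g⁻¹ := by
  refine ⟨by rw [Matrix.det_nonsing_inv, hg.1, Ring.inverse_one], ?_⟩
  change (g⁻¹)ᴴ * I11 * g⁻¹ = I11
  have hinv : (g⁻¹)ᴴ * gᴴ = 1 := by
    rw [← Matrix.conjTranspose_mul, Matrix.mul_nonsing_inv g hg.isUnit_det,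
      Matrix.conjTranspose_one]
  calc (g⁻¹)ᴴ * I11 * g⁻¹ = (g⁻¹)ᴴ * (gᴴ * I11 * g) * g⁻¹ := by rw [hg.conjTranspose_mul_I11_mul]
    _ = ((g⁻¹)ᴴ * gᴴ) * I11 * (g * g⁻¹) := by simp only [Matrix.mul_assoc]
    _ = I11 := by rw [hinv, Matrix.mul_nonsing_inv g hg.isUnit_det, Matrix.one_mul, Matrix.mul_one]

lemma SU11.tw_eq {g : M2} (hg : SU11 g) : tw g = g.map (starRingEnd ℂ) := by
  have hinv : (gᴴ)⁻¹ = I11 * g * I11 := by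
    refine Matrix.inv_eq_right_inv ?_
    calc gᴴ * (I11 * g * I11) = (gᴴ * I11 * g) * I11 := by simp only [Matrix.mul_assoc]
      _ = 1 := by rw [hg.conjTranspose_mul_I11_mul, I11_mul_I11]
  change (I11 * (gᴴ)⁻¹ * I11).map (starRingEnd ℂ) = _
  rw [hinv, show I11 * (I11 * g * I11) * I11 = (I11 * I11) * g * (I11 * I11) by
    simp only [Matrix.mul_assoc], I11_mul_I11, Matrix.one_mul, Matrix.mul_one]

def su (a b : ℂ) : M2 := !![a, b; conj b, conj a]

lemma su_mulVec (a b : ℂ) (v : Fin 2 → ℂ) :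
    su a b *ᵥ v = ![a * v 0 + b * v 1, conj b * v 0 + conj a * v 1] := by
  ext i; fin_cases i <;> simp [su, Matrix.mulVec, dotProduct, Fin.sum_univ_two]

lemma su_mem {a b : ℂ} (h : a * conj a - b * conj b = 1) : SU11 (su a b) := by
  refine ⟨by simp only [su, Matrix.det_fin_two_of]; linear_combination h, ?_⟩
  ext i j
  fin_cases i <;> fin_cases j <;>
    simp only [su, I11, Matrix.mul_apply, transpose_apply, map_apply, of_apply, cons_val',
      cons_val_zero, cons_val_one, cons_val_fin_one, Fin.sum_univ_two, RingHomCompTriple.comp_apply,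
      RingHom.id_apply, mul_one, mul_zero, add_zero, mul_neg, zero_add, neg_mul, Fin.isValue,
      Fin.zero_eta, Fin.mk_one] <;>
    first | ring1 | linear_combination h | linear_combination -h

lemma tw_su {a b : ℂ} (h : a * conj a - b * conj b = 1) : tw (su a b) = su (conj a) (conj b) := by
  rw [(su_mem h).tw_eq]
  ext i j; fin_cases i <;> fin_cases j <;> simp [su]

def bil (z w : Fin 2 → ℂ) : ℂ := z 0 * w 0 - z 1 * w 1

lemma bil_eq_dotProduct (z w : Fin 2 → ℂ) : bil z w = z ⬝ᵥ I11 *ᵥ w := by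
  simp only [bil, I11, dotProduct, mulVec, of_apply, cons_val', cons_val_fin_one,
    Fin.sum_univ_two, cons_val_zero, cons_val_one, Fin.isValue]
  ring

lemma star_dotProduct_I11_mulVec (v : Fin 2 → ℂ) :
    star v ⬝ᵥ I11 *ᵥ v = ((‖v 0‖ ^ 2 - ‖v 1‖ ^ 2 : ℝ) : ℂ) := by
  simp only [I11, dotProduct, Pi.star_apply, RCLike.star_def, mulVec, of_apply, cons_val',
    cons_val_fin_one, Fin.sum_univ_two, Fin.isValue, cons_val_zero, cons_val_one, one_mul,
    zero_mul, add_zero, neg_mul, zero_add, mul_neg, ofReal_sub, ofReal_pow]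
  rw [Complex.conj_mul', Complex.conj_mul', sub_eq_add_neg]

lemma SU11.transpose_mul_I11_mul_tw {g : M2} (hg : SU11 g) : gᵀ * I11 * tw g = I11 := by
  have h := congrArg (Matrix.map · (starRingEnd ℂ)) hg.2
  simp only [Matrix.map_mul] at h
  rw [hg.tw_eq]
  convert h using 3
  · ext i j; simp
  · ext i j; fin_cases i <;> fin_cases j <;> simp [I11]
  · ext i j; fin_cases i <;> fin_cases j <;> simp [I11]

lemma SU11.bil_mulVec {g : M2} (hg : SU11 g) (z w : Fin 2 → ℂ) :
    bil (g *ᵥ z) (tw g *ᵥ w) = bil z w := by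
  rw [bil_eq_dotProduct, bil_eq_dotProduct, ← Matrix.vecMul_transpose, ← Matrix.dotProduct_mulVec,
    Matrix.mulVec_mulVec, Matrix.mulVec_mulVec, hg.transpose_mul_I11_mul_tw]

lemma SU11.norm_sq_sub_norm_sq_mulVec {g : M2} (hg : SU11 g) (z : Fin 2 → ℂ) :
    ‖(g *ᵥ z) 0‖ ^ 2 - ‖(g *ᵥ z) 1‖ ^ 2 = ‖z 0‖ ^ 2 - ‖z 1‖ ^ 2 := by
  have h : star (g *ᵥ z) ⬝ᵥ I11 *ᵥ (g *ᵥ z) = star z ⬝ᵥ I11 *ᵥ z := by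
    rw [Matrix.star_mulVec, ← Matrix.dotProduct_mulVec, Matrix.mulVec_mulVec,
      Matrix.mulVec_mulVec, hg.conjTranspose_mul_I11_mul]
  rw [star_dotProduct_I11_mulVec, star_dotProduct_I11_mulVec] at h
  exact_mod_cast h

def Wv : Set ((Fin 2 → ℂ) × (Fin 2 → ℂ)) := {p | ‖p.1 1‖ < ‖p.1 0‖ ∧ bil p.1 p.2 ≠ 0}

lemma SU11.mulVec_mem_Wv {g : M2} (hg : SU11 g) {p : (Fin 2 → ℂ) × (Fin 2 → ℂ)} (hp : p ∈ Wv) :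
    (g *ᵥ p.1, tw g *ᵥ p.2) ∈ Wv := by
  refine ⟨?_, by rw [hg.bil_mulVec]; exact hp.2⟩
  have h := hg.norm_sq_sub_norm_sq_mulVec p.1
  have h1 := hp.1
  rw [← sq_lt_sq₀ (norm_nonneg _) (norm_nonneg _)] at h1 ⊢
  linarith

def ProjMaps (g : M2) (q p : (Fin 2 → ℂ) × (Fin 2 → ℂ)) : Prop :=
  ∃ α β : ℂ, α ≠ 0 ∧ β ≠ 0 ∧ g *ᵥ q.1 = α • p.1 ∧ tw g *ᵥ q.2 = β • p.2

namespace ProjMaps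

variable {g h : M2} {q p r : (Fin 2 → ℂ) × (Fin 2 → ℂ)}

lemma mul (hh : ProjMaps h q p) (hg : ProjMaps g p r) : ProjMaps (g * h) q r := by
  obtain ⟨α, β, hα, hβ, h1, h2⟩ := hh
  obtain ⟨α', β', hα', hβ', h1', h2'⟩ := hg
  refine ⟨α' * α, β' * β, mul_ne_zero hα' hα, mul_ne_zero hβ' hβ, ?_, ?_⟩
  · rw [← Matrix.mulVec_mulVec, h1, Matrix.mulVec_smul, h1', smul_smul, mul_comm]
  · rw [tw_mul, ← Matrix.mulVec_mulVec, h2, Matrix.mulVec_smul, h2', smul_smul, mul_comm]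

lemma inv (hg : IsUnit g.det) (h : ProjMaps g q p) : ProjMaps g⁻¹ p q := by
  obtain ⟨α, β, hα, hβ, h1, h2⟩ := h
  have hinv : g⁻¹ * g = 1 := Matrix.nonsing_inv_mul g hg
  refine ⟨α⁻¹, β⁻¹, inv_ne_zero hα, inv_ne_zero hβ, ?_, ?_⟩
  · rw [eq_inv_smul_iff₀ hα, ← Matrix.mulVec_smul, ← h1, Matrix.mulVec_mulVec, hinv,
      Matrix.one_mulVec]
  · rw [eq_inv_smul_iff₀ hβ, ← Matrix.mulVec_smul, ← h2, Matrix.mulVec_mulVec, ← tw_mul, hinv,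
      tw_one, Matrix.one_mulVec]

lemma mk_eq (h : ProjMaps g q p) (hp₁ : p.1 ≠ 0) (hp₂ : p.2 ≠ 0) :
    ∃ (hz : g *ᵥ q.1 ≠ 0) (hw : tw g *ᵥ q.2 ≠ 0),
      (Projectivization.mk ℂ p.1 hp₁, Projectivization.mk ℂ p.2 hp₂) =
        (Projectivization.mk ℂ (g *ᵥ q.1) hz, Projectivization.mk ℂ (tw g *ᵥ q.2) hw) := by
  obtain ⟨α, β, hα, hβ, h1, h2⟩ := h
  refine ⟨h1 ▸ smul_ne_zero hα hp₁, h2 ▸ smul_ne_zero hβ hp₂, Prod.ext ?_ ?_⟩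
  · exact (Projectivization.mk_eq_mk_iff' ℂ _ _ _ _).2 ⟨α⁻¹, by rw [h1, inv_smul_smul₀ hα]⟩
  · exact (Projectivization.mk_eq_mk_iff' ℂ _ _ _ _).2 ⟨β⁻¹, by rw [h2, inv_smul_smul₀ hβ]⟩

end ProjMaps

def normalForm (ρ : ℝ) : (Fin 2 → ℂ) × (Fin 2 → ℂ) := (![1, 0], ![1, I * ρ])

def orbitParam (p : (Fin 2 → ℂ) × (Fin 2 → ℂ)) : ℝ :=
  ‖conj (p.1 0) * p.2 1 - conj (p.1 1) * p.2 0‖ / ‖bil p.1 p.2‖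

lemma orbitParam_nonneg (p : (Fin 2 → ℂ) × (Fin 2 → ℂ)) : 0 ≤ orbitParam p :=
  div_nonneg (norm_nonneg _) (norm_nonneg _)

lemma exists_mul_conj_eq_one_conj_mul_eq (D B : ℂ) (hB : B ≠ 0) :
    ∃ μ : ℂ, μ * conj μ = 1 ∧ conj μ * D = μ * (I * (‖D‖ / ‖B‖ : ℝ) * B) := by
  by_cases hD : D = 0
  · exact ⟨1, by simp, by simp [hD]⟩
  set c : ℂ := I * (‖D‖ / ‖B‖ : ℝ) * B
  have hc : ‖c‖ = ‖D‖ := by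
    simp [c, Complex.norm_real, div_mul_cancel₀ _ (norm_ne_zero_iff.2 hB)]
  have hc0 : c ≠ 0 := norm_ne_zero_iff.1 (hc ▸ norm_ne_zero_iff.2 hD)
  obtain ⟨μ, hμ⟩ := IsAlgClosed.exists_pow_nat_eq (D / c) two_pos
  have hμ1 : μ * conj μ = 1 := by
    have : ‖μ‖ ^ 2 = 1 := by
      rw [← norm_pow, hμ, norm_div, hc, div_self (norm_ne_zero_iff.2 hD)]
    rw [Complex.mul_conj', ← Complex.ofReal_pow, this, Complex.ofReal_one]
  refine ⟨μ, hμ1, ?_⟩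
  calc conj μ * D = conj μ * (μ ^ 2 * c) := by rw [hμ, div_mul_cancel₀ _ hc0]
    _ = (μ * conj μ) * μ * c := by ring
    _ = μ * c := by rw [hμ1, one_mul]

lemma exists_SU11_projMaps_normalForm {p : (Fin 2 → ℂ) × (Fin 2 → ℂ)} (hp : p ∈ Wv) :
    ∃ g, SU11 g ∧ ProjMaps g (normalForm (orbitParam p)) p := by
  obtain ⟨z, w⟩ := p
  obtain ⟨hlt, hB⟩ := hp
  set D := conj (z 0) * w 1 - conj (z 1) * w 0
  obtain ⟨μ, hμ, hμD⟩ := exists_mul_conj_eq_one_conj_mul_eq D (bil z w) hB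
  set h : ℝ := ‖z 0‖ ^ 2 - ‖z 1‖ ^ 2
  have hh : 0 < h := sub_pos.2 (pow_lt_pow_left₀ hlt (norm_nonneg _) two_ne_zero)
  have hz : z 0 * conj (z 0) - z 1 * conj (z 1) = h := by
    simp only [h, Complex.mul_conj', Complex.ofReal_sub, Complex.ofReal_pow]
  set s : ℂ := (Real.sqrt h : ℂ)
  have hs : s * s = h := by rw [← Complex.ofReal_mul, Real.mul_self_sqrt hh.le]
  have hs0 : s ≠ 0 := Complex.ofReal_ne_zero.2 (Real.sqrt_pos.2 hh).ne'
  -- `su (l * z 0) (conj (l * z 1))` sends `[1:0]` to `[z]`; the phase `μ` of `l` makes its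
  -- twisted action send `[1 : iρ]` to `[w]`.
  set l : ℂ := μ / s
  have hl : l * conj l * h = 1 := by
    rw [← hs, map_div₀, Complex.conj_ofReal, div_mul_div_comm, hμ, one_div,
      inv_mul_cancel₀ (mul_ne_zero hs0 hs0)]
  have hsu : l * z 0 * conj (l * z 0) - conj (l * z 1) * conj (conj (l * z 1)) = 1 := by
    simp only [map_mul, Complex.conj_conj]; linear_combination l * conj l * hz + hl
  have hlD : conj l * D = l * (I * orbitParam (z, w) * bil z w) := by
    rw [map_div₀, Complex.conj_ofReal, div_mul_eq_mul_div, hμD, div_mul_eq_mul_div]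
    rfl
  have hl0 : l ≠ 0 := left_ne_zero_of_mul (left_ne_zero_of_mul_eq_one hl)
  refine ⟨_, su_mem hsu, l, conj l * h / bil z w, hl0, ?_, ?_, ?_⟩
  · exact div_ne_zero (mul_ne_zero ((map_ne_zero _).2 hl0) (by exact_mod_cast hh.ne')) hB
  · rw [su_mulVec]
    ext i; fin_cases i <;> simp [normalForm]
  · rw [tw_su hsu, su_mulVec]
    ext i; fin_cases i <;>
      simp only [normalForm, Fin.isValue, map_mul, cons_val_zero, cons_val_one, cons_val_fin_one,
        mul_one, Complex.conj_conj, Fin.zero_eta, Fin.mk_one, Pi.smul_apply, smul_eq_mul] <;>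
      field_simp <;> simp only [bil, D] at hlD ⊢
    · linear_combination (-z 1) * hlD + conj l * w 0 * hz
    · linear_combination (-z 0) * hlD + conj l * w 1 * hz

lemma exists_SU11_projMaps_of_orbitParam_eq {p q : (Fin 2 → ℂ) × (Fin 2 → ℂ)} (hp : p ∈ Wv)
    (hq : q ∈ Wv) (h : orbitParam q = orbitParam p) : ∃ g, SU11 g ∧ ProjMaps g q p := by
  obtain ⟨g, hg, hgp⟩ := exists_SU11_projMaps_normalForm hp
  obtain ⟨k, hk, hkq⟩ := exists_SU11_projMaps_normalForm hq
  rw [h] at hkq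
  exact ⟨g * k⁻¹, hg.mul hk.inv, (hkq.inv hk.isUnit_det).mul hgp⟩

def riPair (x y u v : ℝ) : (Fin 2 → ℂ) × (Fin 2 → ℂ) := (![(x : ℂ), I * y], ![(u : ℂ), I * v])

lemma bil_riPair (x y u v : ℝ) :
    bil (riPair x y u v).1 (riPair x y u v).2 = ((x * u + y * v : ℝ) : ℂ) := by
  simp only [bil, riPair]
  push_cast
  linear_combination (-(y : ℂ) * v) * I_sq

lemma riPair_mem_Wv {x y u v : ℝ} (hyx : |y| < |x|) (h : x * u + y * v ≠ 0) :
    riPair x y u v ∈ Wv := by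
  refine ⟨by simpa [riPair] using hyx, ?_⟩
  rw [bil_riPair]
  exact_mod_cast h

lemma orbitParam_riPair (x y u v : ℝ) :
    orbitParam (riPair x y u v) = |x * v + y * u| / |x * u + y * v| := by
  have hD : conj ((riPair x y u v).1 0) * (riPair x y u v).2 1
      - conj ((riPair x y u v).1 1) * (riPair x y u v).2 0 = I * ((x * v + y * u : ℝ) : ℂ) := by
    simp only [riPair, Fin.isValue, cons_val_zero, cons_val_one, cons_val_fin_one, conj_ofReal,
      map_mul, conj_I, ofReal_add, ofReal_mul]
    ring
  rw [orbitParam, hD, bil_riPair, norm_mul, Complex.norm_I, one_mul, Complex.norm_real,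
    Complex.norm_real, Real.norm_eq_abs, Real.norm_eq_abs]

lemma z1v_eq_riPair : z1v = riPair 1 0 1 0 := by
  simp [z1v, riPair]

lemma w1v_eq_riPair : w1v = riPair 1 0 1 1 := by
  simp [w1v, riPair]

lemma l1v_eq_riPair (t : ℝ) :
    l1v t = riPair (Real.cos (Real.pi * (1 - t) / 4)) (Real.sin (Real.pi * (1 - t) / 4))
      (Real.cos (Real.pi * (1 - t) / 4)) (Real.sin (Real.pi * (1 - t) / 4)) := rfl

lemma l2v_eq_riPair (s : ℝ) :
    l2v s = riPair (Real.exp s) (Real.exp (-s)) (Real.exp (-s)) (Real.exp s) := rfl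

lemma l1v_mem_Wv {t : ℝ} (ht₀ : 0 < t) (ht₁ : t < 1) : l1v t ∈ Wv := by
  set A := Real.pi * (1 - t) / 4
  have hA₀ : 0 < A := by have := Real.pi_pos; positivity
  have hA₁ : A < Real.pi / 4 := by have := Real.pi_pos; simp only [A]; nlinarith
  rw [l1v_eq_riPair]
  refine riPair_mem_Wv ?_ (by nlinarith [Real.sin_sq_add_cos_sq A])
  have hsin : 0 < Real.sin A := Real.sin_pos_of_pos_of_lt_pi hA₀ (by linarith)
  have hcos : 0 < Real.cos A := Real.cos_pos_of_mem_Ioo ⟨by linarith, by linarith⟩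
  rw [abs_of_pos hsin, abs_of_pos hcos, ← Real.sin_pi_div_two_sub]
  exact Real.sin_lt_sin_of_lt_of_le_pi_div_two (by linarith) (by linarith) (by linarith)

lemma orbitParam_l1v (t : ℝ) :
    orbitParam (l1v t) = |Real.sin (2 * (Real.pi * (1 - t) / 4))| := by
  set A := Real.pi * (1 - t) / 4
  have h : Real.cos A * Real.cos A + Real.sin A * Real.sin A = 1 := by
    nlinarith [Real.sin_sq_add_cos_sq A]
  rw [l1v_eq_riPair, orbitParam_riPair, Real.sin_two_mul, h, abs_one, div_one]
  congr 1
  ring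

lemma l2v_mem_Wv {s : ℝ} (hs : 0 < s) : l2v s ∈ Wv := by
  rw [l2v_eq_riPair]
  refine riPair_mem_Wv ?_ (by positivity)
  rw [abs_of_pos (Real.exp_pos _), abs_of_pos (Real.exp_pos _)]
  exact Real.exp_lt_exp.2 (by linarith)

lemma orbitParam_l2v (s : ℝ) : orbitParam (l2v s) = Real.cosh (2 * s) := by
  rw [l2v_eq_riPair, orbitParam_riPair, Real.cosh_eq, abs_of_pos (by positivity),
    abs_of_pos (by positivity), ← Real.exp_add, ← Real.exp_add, ← Real.exp_add, ← Real.exp_add,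
    add_neg_cancel, neg_add_cancel, Real.exp_zero]
  ring_nf

def IsSlicePoint (q : (Fin 2 → ℂ) × (Fin 2 → ℂ)) : Prop :=
  q = z1v ∨ (∃ t : ℝ, 0 < t ∧ t < 1 ∧ q = l1v t) ∨ q = w1v ∨ (∃ s : ℝ, 0 < s ∧ q = l2v s)

lemma IsSlicePoint.mem_Wv {q : (Fin 2 → ℂ) × (Fin 2 → ℂ)} (hq : IsSlicePoint q) : q ∈ Wv := by
  rcases hq with rfl | ⟨t, ht₀, ht₁, rfl⟩ | rfl | ⟨s, hs, rfl⟩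
  · rw [z1v_eq_riPair]; exact riPair_mem_Wv (by norm_num) (by norm_num)
  · exact l1v_mem_Wv ht₀ ht₁
  · rw [w1v_eq_riPair]; exact riPair_mem_Wv (by norm_num) (by norm_num)
  · exact l2v_mem_Wv hs

lemma exists_isSlicePoint_orbitParam_eq {ρ : ℝ} (hρ : 0 ≤ ρ) :
    ∃ q, IsSlicePoint q ∧ orbitParam q = ρ := by
  rcases hρ.eq_or_lt with rfl | hρ₀
  · exact ⟨z1v, Or.inl rfl, by rw [z1v_eq_riPair, orbitParam_riPair]; norm_num⟩
  rcases lt_trichotomy ρ 1 with hρ₁ | rfl | hρ₁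
  · have harcsin₀ : 0 < Real.arcsin ρ := Real.arcsin_pos.2 hρ₀
    have harcsin₁ : Real.arcsin ρ < Real.pi / 2 := Real.arcsin_lt_pi_div_two.2 hρ₁
    have hpi := Real.pi_pos
    refine ⟨l1v (1 - 2 * Real.arcsin ρ / Real.pi), Or.inr (Or.inl ⟨_, ?_, ?_, rfl⟩), ?_⟩
    · rw [sub_pos, div_lt_one hpi]; linarith
    · have : 0 < 2 * Real.arcsin ρ / Real.pi := by positivity
      linarith
    · rw [orbitParam_l1v, show 2 * (Real.pi * (1 - (1 - 2 * Real.arcsin ρ / Real.pi)) / 4)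
        = Real.arcsin ρ by field_simp; ring, Real.sin_arcsin (by linarith) hρ₁.le, abs_of_pos hρ₀]
  · exact ⟨w1v, Or.inr (Or.inr (Or.inl rfl)), by rw [w1v_eq_riPair, orbitParam_riPair]; norm_num⟩
  · refine ⟨l2v (Real.arcosh ρ / 2), Or.inr (Or.inr (Or.inr ⟨_, by
      have := Real.arcosh_pos hρ₁; positivity, rfl⟩)), ?_⟩
    rw [orbitParam_l2v, mul_div_cancel₀ _ two_ne_zero, Real.cosh_arcosh hρ₁.le]

/-- The union of the `SU(1,1)`-translates of the slice points
`{z₁} ∪ ℓ₁((0,1)) ∪ {w₁} ∪ ℓ₂((0,∞))` is exactly the domain `W`. -/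
theorem union_of_translates_eq_W :
    {p : P1 × P1 | ∃ g : M2, SU11 g ∧
      ∃ q : (Fin 2 → ℂ) × (Fin 2 → ℂ),
        (q = z1v ∨ (∃ t : ℝ, 0 < t ∧ t < 1 ∧ q = l1v t) ∨ q = w1v ∨
          (∃ s : ℝ, 0 < s ∧ q = l2v s)) ∧
        ∃ (hz : g.mulVec q.1 ≠ 0) (hw : (tw g).mulVec q.2 ≠ 0),
          p = (Projectivization.mk ℂ (g.mulVec q.1) hz,
               Projectivization.mk ℂ ((tw g).mulVec q.2) hw)} = W := by
  ext p
  constructor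
  · rintro ⟨g, hg, q, hq, hz, hw, rfl⟩
    exact ⟨_, _, hz, hw, rfl, hg.mulVec_mem_Wv (IsSlicePoint.mem_Wv hq)⟩
  · rintro ⟨z, w, hz, hw, rfl, hzw⟩
    obtain ⟨q, hq, hρ⟩ := exists_isSlicePoint_orbitParam_eq (orbitParam_nonneg (z, w))
    obtain ⟨g, hg, hgq⟩ := exists_SU11_projMaps_of_orbitParam_eq hzw hq.mem_Wv hρ
    obtain ⟨hz', hw', he⟩ := hgq.mk_eq hz hw
    exact ⟨g, hg, q, hq, hz', hw', he⟩

end
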